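/- Let σ be an oriented polytope in ℝ^n of dimension k ≥ 1, and let X be a polyhedral subdivision of σ all of whose members are oriented. Suppose τ ∈ X_{k−1} is a facet of two distinct faces σ₁, σ₂ ∈ X_k. Then sign(σ₁,σ)·sign(τ,σ₁) + sign(σ₂,σ)·sign(τ,σ₂) = 0. -/

import Mathlib

open Set
open scoped InnerProductSpace

noncomputable section

abbrev Euc (n : ℕ) : Type := EuclideanSpace ℝ (Fin n)

/-- A polytope is the convex hull of a finite set of points. -/
def IsPolytope {n : ℕ} (P : Set (Euc n)) : Prop :=
  ∃ s : Finset (Euc n), P = convexHull ℝ (s : Set (Euc n))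

/-- A face of a polytope: the intersection of `P` with a supporting hyperplane. -/
def IsFaceOf {n : ℕ} (F P : Set (Euc n)) : Prop :=
  ∃ (f : Euc n →ₗ[ℝ] ℝ) (c : ℝ), (∀ x ∈ P, f x ≤ c) ∧ F = {x ∈ P | f x = c}

/-- The dimension of a polytope: the dimension of its affine hull. -/
def polyDim {n : ℕ} (P : Set (Euc n)) : ℕ :=
  Module.finrank ℝ ↥(vectorSpan ℝ P)

/-- A polyhedral cell complex in `ℝⁿ`. -/
structure PolyComplex (n : ℕ) where
  faces : Set (Set (Euc n))
  finite : faces.Finite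
  nonempty : ∀ P ∈ faces, P.Nonempty
  isPolytope : ∀ P ∈ faces, IsPolytope P
  face_mem : ∀ P ∈ faces, ∀ F, IsFaceOf F P → F.Nonempty → F ∈ faces
  inter_face : ∀ P ∈ faces, ∀ Q ∈ faces, (P ∩ Q).Nonempty →
    IsFaceOf (P ∩ Q) P ∧ IsFaceOf (P ∩ Q) Q

/-- `X_k`: the members of `X` of dimension `k`. -/
def PolyComplex.cells {n : ℕ} (X : PolyComplex n) (k : ℕ) : Set (Set (Euc n)) :=
  {σ ∈ X.faces | polyDim σ = k}

/-- `|X|`: the union of all members of `X`. -/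
def PolyComplex.support {n : ℕ} (X : PolyComplex n) : Set (Euc n) :=
  ⋃₀ X.faces

/-- An (ambient representative of an) orientation form on `span P`: an alternating form whose
restriction to `span P` is nonzero. -/
def OrientsOn {n k : ℕ} (P : Set (Euc n)) (ω : AlternatingMap ℝ (Euc n) ℝ (Fin k)) : Prop :=
  ∃ w : Fin k → Euc n, (∀ i, w i ∈ vectorSpan ℝ P) ∧ ω w ≠ 0

/-- `w` is a basis of `span P`, the space of directions of the affine hull of `P`. -/
def IsSpanBasis {n m : ℕ} (P : Set (Euc n)) (w : Fin m → Euc n) : Prop :=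
  LinearIndependent ℝ w ∧ Submodule.span ℝ (Set.range w) = vectorSpan ℝ P

/-- A normal vector of the facet `τ` pointing inwards to `σ`. -/
def IsInwardNormal {n : ℕ} (τ σ : Set (Euc n)) (η : Euc n) : Prop :=
  η ≠ 0 ∧ η ∈ vectorSpan ℝ σ ∧ (∀ w ∈ vectorSpan ℝ τ, ⟪η, w⟫_ℝ = 0) ∧
    ∀ p ∈ τ, ∀ x ∈ σ, 0 ≤ ⟪η, x - p⟫_ℝ

/-- The value `sgn(ω_σ(η, w₁, …, w_m)) · sgn(ω_τ(w₁, …, w_m))` computing `sign(τ,σ)` from the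
choice of inward normal `η` and basis `w` of `span τ`. -/
def facetSignVal {n m : ℕ} (ωσ : AlternatingMap ℝ (Euc n) ℝ (Fin (m + 1)))
    (ωτ : AlternatingMap ℝ (Euc n) ℝ (Fin m)) (η : Euc n) (w : Fin m → Euc n) : ℝ :=
  Real.sign (ωσ (Fin.cons η w)) * Real.sign (ωτ w)

/-- The value `sgn(ω_σ(w₁,…,w_k)) · sgn(ω_σ'(w₁,…,w_k))` computing `sign(σ',σ)` for polytopes
of equal dimension from the choice of basis `w` of `span σ`. -/
def relSignVal {n k : ℕ} (ωσ ωσ' : AlternatingMap ℝ (Euc n) ℝ (Fin k))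
    (w : Fin k → Euc n) : ℝ :=
  Real.sign (ωσ w) * Real.sign (ωσ' w)

/-!
Both cells have the same span as `σ`, and this span splits as `span τ ⊕ ℝ η₁`; since `η₂` is
also orthogonal to `span τ`, we get `η₂ = c • η₁`. If `c > 0`, both cells contain the points
`p + r • η₁` for a relative interior point `p` of `τ` and small `r > 0`, so their common face
`σ₁ ∩ σ₂` spans as much as each of them and hence equals both, contradicting `σ₁ ≠ σ₂`.
So `c < 0`, and once every sign is computed in the basis `(η₁, w₁)` of `span σ` the two summands
are `± sgn ω_σ(η₁, w₁) · sgn ω_τ(w₁)` with opposite signs.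
-/

namespace Real

theorem sign_mul (a b : ℝ) : sign (a * b) = sign a * sign b := by
  rcases lt_trichotomy a 0 with ha | rfl | ha <;> rcases lt_trichotomy b 0 with hb | rfl | hb <;>
    simp [sign_of_neg, sign_of_pos, mul_pos_of_neg_of_neg, mul_neg_of_neg_of_pos,
      mul_neg_of_pos_of_neg, *]

theorem sign_mul_self_of_ne_zero {a : ℝ} (ha : a ≠ 0) : sign a * sign a = 1 := by
  rw [← sign_mul, sign_of_pos (mul_self_pos.2 ha)]

end Real

theorem vectorSpan_le_ker_of_forall_eq {R E F : Type*} [Ring R] [AddCommGroup E] [Module R E]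
    [AddCommGroup F] [Module R F] {s : Set E} {f : E →ₗ[R] F}
    (h : ∀ x ∈ s, ∀ y ∈ s, f x = f y) : vectorSpan R s ≤ LinearMap.ker f := by
  rw [vectorSpan_def, Submodule.span_le]
  rintro _ ⟨x, hx, y, hy, rfl⟩
  simp [h x hx y hy]

theorem AlternatingMap.apply_coe_eq_mul_det {R E ι : Type*} [CommRing R] [AddCommGroup E]
    [Module R E] [Fintype ι] [DecidableEq ι] {V : Submodule R E} (ω : E [⋀^ι]→ₗ[R] R)
    (b : Module.Basis ι R V) (v : ι → V) :
    ω (fun i => v i) = ω (fun i => b i) * b.det v := by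
  simpa using congrArg (· v) ((ω.compLinearMap V.subtype).eq_smul_basis_det b)

theorem mem_span_singleton_of_mem_sup_of_mem_orthogonal {E : Type*} [NormedAddCommGroup E]
    [InnerProductSpace ℝ E] {W : Submodule ℝ E} {η₁ η₂ : E} (h₁ : η₁ ∈ Wᗮ) (h₂ : η₂ ∈ Wᗮ)
    (h : η₂ ∈ W ⊔ ℝ ∙ η₁) : η₂ ∈ ℝ ∙ η₁ := by
  obtain ⟨w, hw, z, hz, rfl⟩ := Submodule.mem_sup.1 h
  have hw' : w ∈ Wᗮ := by
    simpa using Wᗮ.sub_mem h₂ (Submodule.span_singleton_le_iff_mem _ _ |>.2 h₁ hz)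
  rw [Submodule.disjoint_def.1 W.orthogonal_disjoint w hw hw', zero_add]
  exact hz

section Orientation

variable {n : ℕ}

def IsSpanBasis.basis {m : ℕ} {P : Set (Euc n)} {w : Fin m → Euc n} (h : IsSpanBasis P w) :
    Module.Basis (Fin m) ℝ (vectorSpan ℝ P) :=
  (Module.Basis.span h.1).map (LinearEquiv.ofEq _ _ h.2)

@[simp]
theorem IsSpanBasis.coe_basis {m : ℕ} {P : Set (Euc n)} {w : Fin m → Euc n}
    (h : IsSpanBasis P w) (i : Fin m) : (h.basis i : Euc n) = w i := by
  simp [IsSpanBasis.basis]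

theorem IsSpanBasis.apply_eq_mul_det {k : ℕ} {P : Set (Euc n)} {w : Fin k → Euc n}
    (h : IsSpanBasis P w) (ω : Euc n [⋀^Fin k]→ₗ[ℝ] ℝ) (v : Fin k → vectorSpan ℝ P) :
    ω (fun i => v i) = ω w * h.basis.det v := by
  rw [ω.apply_coe_eq_mul_det h.basis]
  simp

theorem IsSpanBasis.apply_eq_mul_det_basis {k : ℕ} {P : Set (Euc n)} {w w' : Fin k → Euc n}
    (h : IsSpanBasis P w) (h' : IsSpanBasis P w') (ω : Euc n [⋀^Fin k]→ₗ[ℝ] ℝ) :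
    ω w' = ω w * h.basis.det h'.basis := by
  rw [← h.apply_eq_mul_det]
  simp

theorem OrientsOn.apply_ne_zero {k : ℕ} {P : Set (Euc n)} {ω : Euc n [⋀^Fin k]→ₗ[ℝ] ℝ}
    (hω : OrientsOn P ω) {w : Fin k → Euc n} (hw : IsSpanBasis P w) : ω w ≠ 0 := by
  obtain ⟨v, hv, hωv⟩ := hω
  intro h0
  apply hωv
  simpa [h0] using hw.apply_eq_mul_det ω (fun i => ⟨v i, hv i⟩)

theorem IsSpanBasis.of_vectorSpan_eq {m : ℕ} {P Q : Set (Euc n)} {w : Fin m → Euc n}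
    (h : IsSpanBasis P w) (hPQ : vectorSpan ℝ Q = vectorSpan ℝ P) : IsSpanBasis Q w :=
  ⟨h.1, h.2.trans hPQ.symm⟩

theorem IsSpanBasis.cons {m : ℕ} {τ σ : Set (Euc n)} {w : Fin m → Euc n} {η : Euc n}
    (hw : IsSpanBasis τ w) (hη : η ∉ vectorSpan ℝ τ)
    (hspan : vectorSpan ℝ τ ⊔ ℝ ∙ η = vectorSpan ℝ σ) :
    IsSpanBasis σ (Fin.cons η w : Fin (m + 1) → Euc n) :=
  ⟨linearIndependent_finCons.2 ⟨hw.1, hw.2 ▸ hη⟩, by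
    rw [Fin.range_cons, Submodule.span_insert, hw.2, sup_comm, hspan]⟩

theorem relSignVal_eq_of_isSpanBasis {k : ℕ} {σ : Set (Euc n)} {ωσ ωσ' : Euc n [⋀^Fin k]→ₗ[ℝ] ℝ}
    {u u' : Fin k → Euc n} (hu : IsSpanBasis σ u) (hu' : IsSpanBasis σ u') :
    relSignVal ωσ ωσ' u' = relSignVal ωσ ωσ' u := by
  have hdet := Real.sign_mul_self_of_ne_zero (hu.basis.isUnit_det hu'.basis).ne_zero
  simp only [relSignVal, hu.apply_eq_mul_det_basis hu', Real.sign_mul]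
  linear_combination Real.sign (ωσ u) * Real.sign (ωσ' u) * hdet

theorem facetSignVal_eq_of_isSpanBasis {m : ℕ} {τ : Set (Euc n)}
    {ωσ : Euc n [⋀^Fin (m + 1)]→ₗ[ℝ] ℝ} {ωτ : Euc n [⋀^Fin m]→ₗ[ℝ] ℝ} {η : Euc n}
    {w w' : Fin m → Euc n} (hw : IsSpanBasis τ w) (hw' : IsSpanBasis τ w') :
    facetSignVal ωσ ωτ η w' = facetSignVal ωσ ωτ η w := by
  have hdet := Real.sign_mul_self_of_ne_zero (hw.basis.isUnit_det hw'.basis).ne_zero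
  have hcons : ωσ (Fin.cons η w') = ωσ (Fin.cons η w) * hw.basis.det hw'.basis :=
    hw.apply_eq_mul_det_basis hw' (ωσ.curryLeft η)
  simp only [facetSignVal, hcons, hw.apply_eq_mul_det_basis hw', Real.sign_mul]
  linear_combination Real.sign (ωσ (Fin.cons η w)) * Real.sign (ωτ w) * hdet

theorem facetSignVal_smul {m : ℕ} (ωσ : Euc n [⋀^Fin (m + 1)]→ₗ[ℝ] ℝ)
    (ωτ : Euc n [⋀^Fin m]→ₗ[ℝ] ℝ) (c : ℝ) (η : Euc n) (w : Fin m → Euc n) :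
    facetSignVal ωσ ωτ (c • η) w = Real.sign c * facetSignVal ωσ ωτ η w := by
  have hcons : ωσ (Fin.cons (c • η) w) = c * ωσ (Fin.cons η w) := ωσ.map_vecCons_smul w c η
  rw [facetSignVal, facetSignVal, hcons, Real.sign_mul, mul_assoc]

end Orientation

section Convex

open Filter Topology

variable {E : Type*} [NormedAddCommGroup E] [NormedSpace ℝ E]

theorem eventually_add_smul_mem_of_mem_intrinsicInterior {s : Set E} {p v : E}
    (hp : p ∈ intrinsicInterior ℝ s) (hv : v ∈ vectorSpan ℝ s) :
    ∀ᶠ t in 𝓝 (0 : ℝ), p + t • v ∈ s := by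
  obtain ⟨q, hq, rfl⟩ := mem_intrinsicInterior.1 hp
  have hline (t : ℝ) : (q : E) + t • v ∈ affineSpan ℝ s := by
    rw [add_comm]
    exact AffineSubspace.vadd_mem_of_mem_direction
      (Submodule.smul_mem _ t (direction_affineSpan ℝ s ▸ hv)) q.2
  let φ : ℝ → affineSpan ℝ s := fun t => ⟨q + t • v, hline t⟩
  have hφ : Continuous φ := by fun_prop
  have hφ0 : φ 0 = q := by simp [φ]
  filter_upwards [hφ.continuousAt.preimage_mem_nhds (hφ0 ▸ isOpen_interior.mem_nhds hq)]
    with t ht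
  exact (interior_subset ht : φ t ∈ ((↑) ⁻¹' s : Set (affineSpan ℝ s)))

theorem Convex.exists_add_smul_mem {σ τ : Set E} {p y d : E} (hσ : Convex ℝ σ) (hτσ : τ ⊆ σ)
    (hp : p ∈ intrinsicInterior ℝ τ) (hy : y ∈ σ) (hyd : y - p - d ∈ vectorSpan ℝ τ) :
    ∃ ε : ℝ, 0 < ε ∧ p + ε • d ∈ σ := by
  obtain ⟨t, ht, htpos⟩ := ((eventually_add_smul_mem_of_mem_intrinsicInterior hp
    (Submodule.neg_mem _ hyd)).filter_mono nhdsWithin_le_nhds |>.and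
    (self_mem_nhdsWithin (s := Set.Ioi 0))).exists
  obtain ⟨a, hapos, ha⟩ : ∃ a : ℝ, 0 < a ∧ a * (1 + t) = 1 :=
    ⟨(1 + t)⁻¹, by positivity, inv_mul_cancel₀ (by positivity)⟩
  -- `p + t a d = a (p - t (y - p - d)) + t a y` with `a = 1 / (1 + t)`
  refine ⟨t * a, by positivity, ?_⟩
  convert hσ (hτσ ht) hy hapos.le (by positivity : 0 ≤ t * a) (by linear_combination ha)
    using 1
  linear_combination (norm := module) -(ha • p)

theorem Convex.eventually_add_smul_mem {σ : Set E} {p d : E} {ε : ℝ} (hσ : Convex ℝ σ)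
    (hp : p ∈ σ) (hε : 0 < ε) (hd : p + ε • d ∈ σ) :
    ∀ᶠ r in 𝓝[>] (0 : ℝ), p + r • d ∈ σ := by
  filter_upwards [Ioc_mem_nhdsGT hε] with r hr
  have h := hσ.add_smul_mem hp hd ⟨div_nonneg hr.1.le hε.le, (div_le_one hε).2 hr.2⟩
  rwa [smul_smul, div_mul_cancel₀ r hε.ne'] at h

end Convex

section InnerProduct

open Filter Topology

variable {E : Type*} [NormedAddCommGroup E] [InnerProductSpace ℝ E]

theorem eventually_add_smul_mem_of_inner_pos {σ τ : Set E} {p y η : E} (hσ : Convex ℝ σ)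
    (hτσ : τ ⊆ σ) (hp : p ∈ intrinsicInterior ℝ τ) (hη : η ∈ (vectorSpan ℝ τ)ᗮ)
    (hspan : vectorSpan ℝ σ ≤ vectorSpan ℝ τ ⊔ ℝ ∙ η) (hy : y ∈ σ) (hpos : 0 < ⟪η, y - p⟫_ℝ) :
    ∀ᶠ r in 𝓝[>] (0 : ℝ), p + r • η ∈ σ := by
  have hpσ : p ∈ σ := hτσ (intrinsicInterior_subset hp)
  obtain ⟨v, hv, z, hz, hyp⟩ := Submodule.mem_sup.1 (hspan (vsub_mem_vectorSpan ℝ hy hpσ))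
  obtain ⟨s, rfl⟩ := Submodule.mem_span_singleton.1 hz
  rw [vsub_eq_sub] at hyp
  have hs : 0 < s := by
    rw [← hyp, inner_add_right, (Submodule.mem_orthogonal' _ _).1 hη v hv,
      zero_add, real_inner_smul_right] at hpos
    exact pos_of_mul_pos_left hpos real_inner_self_nonneg
  obtain ⟨ε, hε, hmem⟩ := hσ.exists_add_smul_mem hτσ hp hy (d := s • η)
    (by rwa [← hyp, add_sub_cancel_right])
  rw [smul_smul] at hmem
  exact hσ.eventually_add_smul_mem hpσ (mul_pos hε hs) hmem

end InnerProduct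

section Polytope

variable {n : ℕ}

theorem IsFaceOf.subset {F P : Set (Euc n)} (h : IsFaceOf F P) : F ⊆ P := by
  obtain ⟨f, c, -, rfl⟩ := h
  exact Set.sep_subset _ _

theorem IsFaceOf.eq_of_vectorSpan_le {F P : Set (Euc n)} (h : IsFaceOf F P) (hne : F.Nonempty)
    (hle : vectorSpan ℝ P ≤ vectorSpan ℝ F) : F = P := by
  obtain ⟨f, c, -, rfl⟩ := h
  obtain ⟨q, hqP, hqc⟩ := hne
  refine (Set.sep_subset _ _).antisymm fun x hx => ⟨hx, ?_⟩
  have hker := vectorSpan_le_ker_of_forall_eq (f := f) (s := {x ∈ P | f x = c})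
    (fun x hx y hy => hx.2.trans hy.2.symm) (hle (vsub_mem_vectorSpan ℝ hx hqP))
  rw [LinearMap.mem_ker, vsub_eq_sub, map_sub, sub_eq_zero] at hker
  exact hker.trans hqc

namespace IsInwardNormal

variable {τ σ : Set (Euc n)} {η : Euc n}

theorem mem_orthogonal (hη : IsInwardNormal τ σ η) : η ∈ (vectorSpan ℝ τ)ᗮ :=
  (Submodule.mem_orthogonal' _ _).2 hη.2.2.1

theorem notMem_vectorSpan (hη : IsInwardNormal τ σ η) : η ∉ vectorSpan ℝ τ := fun h =>
  hη.1 (inner_self_eq_zero.1 (hη.2.2.1 η h))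

theorem exists_inner_sub_pos (hη : IsInwardNormal τ σ η) {p : Euc n} (hp : p ∈ τ) :
    ∃ y ∈ σ, 0 < ⟪η, y - p⟫_ℝ := by
  by_contra! hle
  have hconst : ∀ x ∈ σ, ∀ y ∈ σ, innerₛₗ ℝ η x = innerₛₗ ℝ η y := by
    intro x hx y hy
    have hx0 := (hle x hx).antisymm (hη.2.2.2 p hp x hx)
    have hy0 := (hle y hy).antisymm (hη.2.2.2 p hp y hy)
    rw [inner_sub_right, sub_eq_zero] at hx0 hy0
    simp [hx0, hy0]
  have hηη := vectorSpan_le_ker_of_forall_eq hconst hη.2.1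
  exact hη.1 (by simpa using hηη)

theorem sup_span_singleton_eq (hη : IsInwardNormal τ σ η) (hτσ : τ ⊆ σ)
    (hdim : polyDim σ = polyDim τ + 1) : vectorSpan ℝ τ ⊔ ℝ ∙ η = vectorSpan ℝ σ :=
  Submodule.eq_of_le_of_finrank_eq
    (sup_le (vectorSpan_mono ℝ hτσ) ((Submodule.span_singleton_le_iff_mem _ _).2 hη.2.1))
    (by rw [Submodule.finrank_sup_span_singleton hη.notMem_vectorSpan]; exact hdim.symm)

end IsInwardNormal

theorem eq_of_isInwardNormal_of_eq_pos_smul {σ₁ σ₂ τ : Set (Euc n)} {η₁ η₂ : Euc n} {c : ℝ}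
    (hσ₁ : Convex ℝ σ₁) (hσ₂ : Convex ℝ σ₂) (hτ : Convex ℝ τ) (hτne : τ.Nonempty)
    (hτσ₁ : τ ⊆ σ₁) (hτσ₂ : τ ⊆ σ₂)
    (hspan : vectorSpan ℝ τ ⊔ ℝ ∙ η₁ = vectorSpan ℝ σ₁)
    (hV : vectorSpan ℝ σ₂ = vectorSpan ℝ σ₁)
    (hface : (σ₁ ∩ σ₂).Nonempty → IsFaceOf (σ₁ ∩ σ₂) σ₁ ∧ IsFaceOf (σ₁ ∩ σ₂) σ₂)
    (hη₁ : IsInwardNormal τ σ₁ η₁) (hη₂ : IsInwardNormal τ σ₂ η₂)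
    (hc : 0 < c) (hη : η₂ = c • η₁) : σ₁ = σ₂ := by
  obtain ⟨p, hp⟩ := hτne.intrinsicInterior hτ
  have hpτ : p ∈ τ := intrinsicInterior_subset hp
  obtain ⟨y₁, hy₁, hpos₁⟩ := hη₁.exists_inner_sub_pos hpτ
  obtain ⟨y₂, hy₂, hpos₂⟩ := hη₂.exists_inner_sub_pos hpτ
  rw [hη, real_inner_smul_left] at hpos₂
  have ev₁ := eventually_add_smul_mem_of_inner_pos hσ₁ hτσ₁ hp hη₁.mem_orthogonal hspan.ge
    hy₁ hpos₁
  have ev₂ := eventually_add_smul_mem_of_inner_pos hσ₂ hτσ₂ hp hη₁.mem_orthogonal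
    (hV.trans hspan.symm).le hy₂ (pos_of_mul_pos_right hpos₂ hc.le)
  obtain ⟨r, ⟨hr₁, hr₂⟩, hr⟩ := ((ev₁.and ev₂).and self_mem_nhdsWithin).exists
  have hz : p + r • η₁ ∈ σ₁ ∩ σ₂ := ⟨hr₁, hr₂⟩
  have hpF : p ∈ σ₁ ∩ σ₂ := ⟨hτσ₁ hpτ, hτσ₂ hpτ⟩
  have hle : vectorSpan ℝ σ₁ ≤ vectorSpan ℝ (σ₁ ∩ σ₂) := by
    rw [← hspan]
    refine sup_le (vectorSpan_mono ℝ (Set.subset_inter hτσ₁ hτσ₂))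
      ((Submodule.span_singleton_le_iff_mem _ _).2 ?_)
    have h := Submodule.smul_mem _ r⁻¹ (vsub_mem_vectorSpan ℝ hz hpF)
    rwa [vsub_eq_sub, add_sub_cancel_left, smul_smul, inv_mul_cancel₀ hr.ne', one_smul] at h
  obtain ⟨hF₁, hF₂⟩ := hface ⟨_, hz⟩
  rw [← hF₁.eq_of_vectorSpan_le ⟨_, hz⟩ hle, hF₂.eq_of_vectorSpan_le ⟨_, hz⟩ (hV.trans_le hle)]

theorem exists_neg_smul_eq_of_isInwardNormal {σ₁ σ₂ τ : Set (Euc n)} {η₁ η₂ : Euc n}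
    (hσ₁ : Convex ℝ σ₁) (hσ₂ : Convex ℝ σ₂) (hτ : Convex ℝ τ) (hτne : τ.Nonempty)
    (hτσ₁ : τ ⊆ σ₁) (hτσ₂ : τ ⊆ σ₂)
    (hspan : vectorSpan ℝ τ ⊔ ℝ ∙ η₁ = vectorSpan ℝ σ₁)
    (hV : vectorSpan ℝ σ₂ = vectorSpan ℝ σ₁)
    (hface : (σ₁ ∩ σ₂).Nonempty → IsFaceOf (σ₁ ∩ σ₂) σ₁ ∧ IsFaceOf (σ₁ ∩ σ₂) σ₂)
    (hne : σ₁ ≠ σ₂) (hη₁ : IsInwardNormal τ σ₁ η₁) (hη₂ : IsInwardNormal τ σ₂ η₂) :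
    ∃ c : ℝ, c < 0 ∧ η₂ = c • η₁ := by
  have hmem : η₂ ∈ vectorSpan ℝ τ ⊔ ℝ ∙ η₁ := hspan ▸ hV ▸ hη₂.2.1
  obtain ⟨c, rfl⟩ := Submodule.mem_span_singleton.1
    (mem_span_singleton_of_mem_sup_of_mem_orthogonal hη₁.mem_orthogonal hη₂.mem_orthogonal hmem)
  have hc : c ≠ 0 := by
    rintro rfl
    exact hη₂.1 (zero_smul ℝ η₁)
  refine ⟨c, lt_of_not_ge fun hc' => hne ?_, rfl⟩
  exact eq_of_isInwardNormal_of_eq_pos_smul hσ₁ hσ₂ hτ hτne hτσ₁ hτσ₂ hspan hV hface hη₁ hη₂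
    (hc'.lt_of_ne' hc) rfl

end Polytope

namespace PolyComplex

variable {n : ℕ} (X : PolyComplex n)

theorem convex_of_mem {P : Set (Euc n)} (hP : P ∈ X.faces) : Convex ℝ P := by
  obtain ⟨s, rfl⟩ := X.isPolytope P hP
  exact convex_convexHull ℝ _

theorem vectorSpan_eq_of_mem_cells {σ σ' : Set (Euc n)} {k : ℕ} (hX : X.support = σ)
    (hσ : polyDim σ = k) (hσ' : σ' ∈ X.cells k) : vectorSpan ℝ σ' = vectorSpan ℝ σ :=
  Submodule.eq_of_le_of_finrank_eq (vectorSpan_mono ℝ (hX ▸ Set.subset_sUnion_of_mem hσ'.1))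
    (hσ'.2.trans hσ.symm)

end PolyComplex

theorem statement2_general {n m : ℕ}
    (σ : Set (Euc n)) (hdσ : polyDim σ = m + 1)
    -- `X` is a polyhedral subdivision of `σ`
    (X : PolyComplex n) (hXσ : X.support = σ)
    (σ₁ σ₂ τ : Set (Euc n))
    (h₁ : σ₁ ∈ X.cells (m + 1)) (h₂ : σ₂ ∈ X.cells (m + 1)) (hτ : τ ∈ X.cells m)
    (hne : σ₁ ≠ σ₂)
    (hf₁ : IsFaceOf τ σ₁) (hf₂ : IsFaceOf τ σ₂)
    -- orientations of `σ`, `σ₁`, `σ₂`, `τ`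
    (ωσ : AlternatingMap ℝ (Euc n) ℝ (Fin (m + 1)))
    (ωσ₁ : AlternatingMap ℝ (Euc n) ℝ (Fin (m + 1))) (hωσ₁ : OrientsOn σ₁ ωσ₁)
    (ωσ₂ : AlternatingMap ℝ (Euc n) ℝ (Fin (m + 1))) (hωσ₂ : OrientsOn σ₂ ωσ₂)
    (ωτ : AlternatingMap ℝ (Euc n) ℝ (Fin m))
    -- data computing sign(σ₁,σ) and sign(σ₂,σ)
    (u₁ : Fin (m + 1) → Euc n) (hu₁ : IsSpanBasis σ u₁)
    (u₂ : Fin (m + 1) → Euc n) (hu₂ : IsSpanBasis σ u₂)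
    -- data computing sign(τ,σ₁) and sign(τ,σ₂)
    (η₁ : Euc n) (hη₁ : IsInwardNormal τ σ₁ η₁)
    (w₁ : Fin m → Euc n) (hw₁ : IsSpanBasis τ w₁)
    (η₂ : Euc n) (hη₂ : IsInwardNormal τ σ₂ η₂)
    (w₂ : Fin m → Euc n) (hw₂ : IsSpanBasis τ w₂) :
    relSignVal ωσ ωσ₁ u₁ * facetSignVal ωσ₁ ωτ η₁ w₁ +
      relSignVal ωσ ωσ₂ u₂ * facetSignVal ωσ₂ ωτ η₂ w₂ = 0 := by
  have hV₁ := X.vectorSpan_eq_of_mem_cells hXσ hdσ h₁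
  have hV₂ := X.vectorSpan_eq_of_mem_cells hXσ hdσ h₂
  have hspan : vectorSpan ℝ τ ⊔ ℝ ∙ η₁ = vectorSpan ℝ σ₁ :=
    hη₁.sup_span_singleton_eq hf₁.subset (h₁.2.trans (congrArg (· + 1) hτ.2.symm))
  obtain ⟨c, hc, rfl⟩ := exists_neg_smul_eq_of_isInwardNormal (X.convex_of_mem h₁.1)
    (X.convex_of_mem h₂.1) (X.convex_of_mem hτ.1) (X.nonempty τ hτ.1) hf₁.subset hf₂.subset
    hspan (hV₂.trans hV₁.symm) (X.inter_face σ₁ h₁.1 σ₂ h₂.1) hne hη₁ hη₂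
  have he : IsSpanBasis σ (Fin.cons η₁ w₁) := hw₁.cons hη₁.notMem_vectorSpan (hspan.trans hV₁)
  have hs₁ := Real.sign_mul_self_of_ne_zero (hωσ₁.apply_ne_zero (he.of_vectorSpan_eq hV₁))
  have hs₂ := Real.sign_mul_self_of_ne_zero (hωσ₂.apply_ne_zero (he.of_vectorSpan_eq hV₂))
  rw [relSignVal_eq_of_isSpanBasis he hu₁, relSignVal_eq_of_isSpanBasis he hu₂,
    facetSignVal_smul, facetSignVal_eq_of_isSpanBasis hw₁ hw₂, Real.sign_of_neg hc]
  simp only [relSignVal, facetSignVal]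
  linear_combination Real.sign (ωσ (Fin.cons η₁ w₁)) * Real.sign (ωτ w₁) * (hs₁ - hs₂)

theorem statement2 {n m : ℕ}
    (σ : Set (Euc n)) (hσ : IsPolytope σ) (hdσ : polyDim σ = m + 1)
    -- `X` is a polyhedral subdivision of `σ`
    (X : PolyComplex n) (hXσ : X.support = σ)
    (σ₁ σ₂ τ : Set (Euc n))
    (h₁ : σ₁ ∈ X.cells (m + 1)) (h₂ : σ₂ ∈ X.cells (m + 1)) (hτ : τ ∈ X.cells m)
    (hne : σ₁ ≠ σ₂)
    (hf₁ : IsFaceOf τ σ₁) (hf₂ : IsFaceOf τ σ₂)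
    -- orientations of `σ`, `σ₁`, `σ₂`, `τ`
    (ωσ : AlternatingMap ℝ (Euc n) ℝ (Fin (m + 1))) (hωσ : OrientsOn σ ωσ)
    (ωσ₁ : AlternatingMap ℝ (Euc n) ℝ (Fin (m + 1))) (hωσ₁ : OrientsOn σ₁ ωσ₁)
    (ωσ₂ : AlternatingMap ℝ (Euc n) ℝ (Fin (m + 1))) (hωσ₂ : OrientsOn σ₂ ωσ₂)
    (ωτ : AlternatingMap ℝ (Euc n) ℝ (Fin m)) (hωτ : OrientsOn τ ωτ)
    -- data computing sign(σ₁,σ) and sign(σ₂,σ)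
    (u₁ : Fin (m + 1) → Euc n) (hu₁ : IsSpanBasis σ u₁)
    (u₂ : Fin (m + 1) → Euc n) (hu₂ : IsSpanBasis σ u₂)
    -- data computing sign(τ,σ₁) and sign(τ,σ₂)
    (η₁ : Euc n) (hη₁ : IsInwardNormal τ σ₁ η₁)
    (w₁ : Fin m → Euc n) (hw₁ : IsSpanBasis τ w₁)
    (η₂ : Euc n) (hη₂ : IsInwardNormal τ σ₂ η₂)
    (w₂ : Fin m → Euc n) (hw₂ : IsSpanBasis τ w₂) :
    relSignVal ωσ ωσ₁ u₁ * facetSignVal ωσ₁ ωτ η₁ w₁ +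
      relSignVal ωσ ωσ₂ u₂ * facetSignVal ωσ₂ ωτ η₂ w₂ = 0 :=
  statement2_general σ hdσ X hXσ σ₁ σ₂ τ h₁ h₂ hτ hne hf₁ hf₂ ωσ ωσ₁ hωσ₁ ωσ₂ hωσ₂ ωτ u₁ hu₁ u₂ hu₂
    η₁ hη₁ w₁ hw₁ η₂ hη₂ w₂ hw₂

end
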